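/- The set G of 5×5 complex matrices g(t,p,q₁,q₂) with rows (t³, t²(p+conj(p)), i·t²·conj(p), i·t·(2|p|²+conj(p)²), q₂), (0, t², 0, 2i·t·conj(p), q₁), (0, 0, t², 2tp, p²), (0, 0, 0, t, p), (0, 0, 0, 0, 1), where t ranges over the nonzero reals and (p,q₁,q₂) ranges over C, is a subgroup of the invertible 5×5 complex matrices: it contains the identity, is closed under matrix multiplication, and each of its elements is invertible with inverse again in G. -/

import Mathlib

open Complex

/-- The cubic model `C = {(z,w₁,w₂) ∈ ℂ³ : Im w₁ = |z|², Im w₂ = (Re z)·|z|²}`. -/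
def cubicC : Set (ℂ × ℂ × ℂ) :=
  {p | p.2.1.im = Complex.normSq p.1 ∧ p.2.2.im = p.1.re * Complex.normSq p.1}

/-- The matrix `g(t,p,q₁,q₂)` of the extended group `G`. -/
noncomputable def gmat (t : ℝ) (p q₁ q₂ : ℂ) : Matrix (Fin 5) (Fin 5) ℂ :=
  !![(t : ℂ) ^ 3, (t : ℂ) ^ 2 * (p + (starRingEnd ℂ) p), I * (t : ℂ) ^ 2 * (starRingEnd ℂ) p,
       I * (t : ℂ) * (2 * (Complex.normSq p : ℂ) + ((starRingEnd ℂ) p) ^ 2), q₂;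
     0, (t : ℂ) ^ 2, 0, 2 * I * (t : ℂ) * (starRingEnd ℂ) p, q₁;
     0, 0, (t : ℂ) ^ 2, 2 * (t : ℂ) * p, p ^ 2;
     0, 0, 0, (t : ℂ), p;
     0, 0, 0, 0, 1]

/-- The set `G` of matrices `g(t,p,q₁,q₂)` with `t ≠ 0` and `(p,q₁,q₂) ∈ C`. -/
noncomputable def Ggrp : Set (Matrix (Fin 5) (Fin 5) ℂ) :=
  {m | ∃ t : ℝ, t ≠ 0 ∧ ∃ p q₁ q₂ : ℂ, (p, q₁, q₂) ∈ cubicC ∧ m = gmat t p q₁ q₂}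

open ComplexConjugate

/-!
Multiplying out gives `g(t,p,q₁,q₂) · g(s,r,r₁,r₂) = g(ts, p', q₁', q₂')` with `(p', q₁', q₂')`
affine in `(r, r₁, r₂)`, triangular with diagonal `t, t², t³`. The defects `Im q₁ - |p|²` and
`Im q₂ - Re p · |p|²` measuring membership in `C` transform alike: those of the product are those of
the left factor plus a triangular combination, with diagonal `t², t³`, of those of the right factor.
So `C` is closed under products and, as `t ≠ 0`, the triangular system can be solved for the
inverse, whose parameters lie in `C` because those of the product, `(0, 0, 0)`, do.
-/

noncomputable def mulP (t : ℝ) (p r : ℂ) : ℂ := t * r + p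

noncomputable def mulQ₁ (t : ℝ) (p q₁ r r₁ : ℂ) : ℂ :=
  t ^ 2 * r₁ + 2 * I * t * conj p * r + q₁

noncomputable def mulQ₂ (t : ℝ) (p q₂ r r₁ r₂ : ℂ) : ℂ :=
  t ^ 3 * r₂ + t ^ 2 * (p + conj p) * r₁ + I * t ^ 2 * conj p * r ^ 2 +
    I * t * (2 * normSq p + conj p ^ 2) * r + q₂

theorem gmat_mul (t s : ℝ) (p q₁ q₂ r r₁ r₂ : ℂ) :
    gmat t p q₁ q₂ * gmat s r r₁ r₂ =
      gmat (t * s) (mulP t p r) (mulQ₁ t p q₁ r r₁) (mulQ₂ t p q₂ r r₁ r₂) := by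
  ext i j
  fin_cases i <;> fin_cases j <;>
    simp [gmat, mulP, mulQ₁, mulQ₂, Matrix.mul_apply, Fin.sum_univ_five, ← mul_conj] <;>
    ring

theorem gmat_one : gmat 1 0 0 0 = 1 := by
  ext i j
  fin_cases i <;> fin_cases j <;> simp [gmat]

def cubicDefect₁ (p q₁ : ℂ) : ℝ := q₁.im - normSq p

def cubicDefect₂ (p q₂ : ℂ) : ℝ := q₂.im - p.re * normSq p

theorem zero_mem_cubicC : ((0 : ℂ), (0 : ℂ), (0 : ℂ)) ∈ cubicC := by
  simp [cubicC]

theorem mem_cubicC_iff {p q₁ q₂ : ℂ} :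
    (p, q₁, q₂) ∈ cubicC ↔ cubicDefect₁ p q₁ = 0 ∧ cubicDefect₂ p q₂ = 0 := by
  simp only [cubicC, Set.mem_ofPred_eq, cubicDefect₁, cubicDefect₂, sub_eq_zero]

theorem cubicDefect₁_mul (t : ℝ) (p q₁ r r₁ : ℂ) :
    cubicDefect₁ (mulP t p r) (mulQ₁ t p q₁ r r₁) =
      t ^ 2 * cubicDefect₁ r r₁ + cubicDefect₁ p q₁ := by
  simp only [cubicDefect₁, mulP, mulQ₁, normSq_apply, add_im, add_re, mul_im, mul_re, I_re,
    I_im, ofReal_re, ofReal_im, conj_re, conj_im, re_ofNat, im_ofNat, sq]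
  ring

theorem cubicDefect₂_mul (t : ℝ) (p q₂ r r₁ r₂ : ℂ) :
    cubicDefect₂ (mulP t p r) (mulQ₂ t p q₂ r r₁ r₂) =
      t ^ 3 * cubicDefect₂ r r₂ + 2 * t ^ 2 * p.re * cubicDefect₁ r r₁ + cubicDefect₂ p q₂ := by
  simp only [cubicDefect₁, cubicDefect₂, mulP, mulQ₂, normSq_apply, add_im, add_re, mul_im,
    mul_re, I_re, I_im, ofReal_re, ofReal_im, conj_re, conj_im, re_ofNat, im_ofNat, pow_succ,
    pow_zero, one_mul]
  ring

theorem mul_mem_cubicC (t : ℝ) {p q₁ q₂ r r₁ r₂ : ℂ}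
    (hp : (p, q₁, q₂) ∈ cubicC) (hr : (r, r₁, r₂) ∈ cubicC) :
    (mulP t p r, mulQ₁ t p q₁ r r₁, mulQ₂ t p q₂ r r₁ r₂) ∈ cubicC := by
  rw [mem_cubicC_iff] at *
  simp [cubicDefect₁_mul, cubicDefect₂_mul, hp, hr]

theorem mem_cubicC_of_mul_mem {t : ℝ} (ht : t ≠ 0) {p q₁ q₂ r r₁ r₂ : ℂ}
    (hp : (p, q₁, q₂) ∈ cubicC)
    (hpr : (mulP t p r, mulQ₁ t p q₁ r r₁, mulQ₂ t p q₂ r r₁ r₂) ∈ cubicC) :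
    (r, r₁, r₂) ∈ cubicC := by
  rw [mem_cubicC_iff] at *
  rw [cubicDefect₁_mul, cubicDefect₂_mul, hp.1, hp.2] at hpr
  have h₁ : cubicDefect₁ r r₁ = 0 := by simpa [ht] using hpr.1
  refine ⟨h₁, ?_⟩
  simpa [h₁, ht] using hpr.2

theorem mulQ₁_eq_add (t : ℝ) (p q₁ r r₁ : ℂ) :
    mulQ₁ t p q₁ r r₁ = t ^ 2 * r₁ + mulQ₁ t p q₁ r 0 := by
  simp only [mulQ₁]
  ring

theorem mulQ₂_eq_add (t : ℝ) (p q₂ r r₁ r₂ : ℂ) :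
    mulQ₂ t p q₂ r r₁ r₂ = t ^ 3 * r₂ + mulQ₂ t p q₂ r r₁ 0 := by
  simp only [mulQ₂]
  ring

-- Back-substitution in the triangular system `mulP = mulQ₁ = mulQ₂ = 0`.
noncomputable def invP (t : ℝ) (p : ℂ) : ℂ := -p / t

noncomputable def invQ₁ (t : ℝ) (p q₁ : ℂ) : ℂ := -mulQ₁ t p q₁ (invP t p) 0 / t ^ 2

noncomputable def invQ₂ (t : ℝ) (p q₁ q₂ : ℂ) : ℂ :=
  -mulQ₂ t p q₂ (invP t p) (invQ₁ t p q₁) 0 / t ^ 3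

theorem mulP_invP {t : ℝ} (ht : t ≠ 0) (p : ℂ) : mulP t p (invP t p) = 0 := by
  have : (t : ℂ) ≠ 0 := ofReal_ne_zero.mpr ht
  simp only [mulP, invP]
  field_simp
  ring

theorem mulQ₁_invQ₁ {t : ℝ} (ht : t ≠ 0) (p q₁ : ℂ) :
    mulQ₁ t p q₁ (invP t p) (invQ₁ t p q₁) = 0 := by
  have : (t : ℂ) ≠ 0 := ofReal_ne_zero.mpr ht
  rw [mulQ₁_eq_add, invQ₁]
  field_simp
  ring

theorem mulQ₂_invQ₂ {t : ℝ} (ht : t ≠ 0) (p q₁ q₂ : ℂ) :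
    mulQ₂ t p q₂ (invP t p) (invQ₁ t p q₁) (invQ₂ t p q₁ q₂) = 0 := by
  have : (t : ℂ) ≠ 0 := ofReal_ne_zero.mpr ht
  rw [mulQ₂_eq_add, invQ₂]
  field_simp
  ring


theorem stmt_6 :
    (1 : Matrix (Fin 5) (Fin 5) ℂ) ∈ Ggrp ∧
    (∀ a ∈ Ggrp, ∀ b ∈ Ggrp, a * b ∈ Ggrp) ∧
    (∀ a ∈ Ggrp, ∃ b ∈ Ggrp, a * b = 1 ∧ b * a = 1) := by
  refine ⟨⟨1, one_ne_zero, 0, 0, 0, zero_mem_cubicC, gmat_one.symm⟩, ?_, ?_⟩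
  · rintro _ ⟨t, ht, p, q₁, q₂, hp, rfl⟩ _ ⟨s, hs, r, r₁, r₂, hr, rfl⟩
    exact ⟨t * s, mul_ne_zero ht hs, _, _, _, mul_mem_cubicC t hp hr, gmat_mul t s p q₁ q₂ r r₁ r₂⟩
  · rintro _ ⟨t, ht, p, q₁, q₂, hp, rfl⟩
    have hinv : (invP t p, invQ₁ t p q₁, invQ₂ t p q₁ q₂) ∈ cubicC := by
      refine mem_cubicC_of_mul_mem ht hp ?_
      rw [mulP_invP ht, mulQ₁_invQ₁ ht, mulQ₂_invQ₂ ht]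
      exact zero_mem_cubicC
    have hmul : gmat t p q₁ q₂ * gmat t⁻¹ (invP t p) (invQ₁ t p q₁) (invQ₂ t p q₁ q₂) = 1 := by
      rw [gmat_mul, mul_inv_cancel₀ ht, mulP_invP ht, mulQ₁_invQ₁ ht, mulQ₂_invQ₂ ht, gmat_one]
    exact ⟨_, ⟨t⁻¹, inv_ne_zero ht, _, _, _, hinv, rfl⟩, hmul, mul_eq_one_comm.mp hmul⟩
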